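/- arXiv:2510.01037 — 3 statements merged into one kernel-verified Lean document; each statement's English description precedes it below -/
import Mathlib

section
/- (Cramér–Rao inequality, finite sample space.) Let Y be a nonempty finite type, and for θ in an open set Θ ⊆ ℝ^k let π_θ : Y → ℝ be a family of probability mass functions with π_θ(y) > 0 for all y, such that θ ↦ π_θ(y) is continuously differentiable for each y. Assume the k×k Fisher information matrix I(θ) = Σ_y π_θ(y) · (∇_θ log π_θ(y)) (∇_θ log π_θ(y))ᵀ is nonsingular at θ. Let T : Y → ℝ^s be any statistic and define g(θ) = Σ_y π_θ(y) T(y) (so T is unbiased for g), and let G(θ) be the s×k Jacobian matrix of g at θ. Then the covariance matrix Cov_{π_θ}(T) = Σ_y π_θ(y) (T(y) − g(θ))(T(y) − g(θ))ᵀ satisfies Cov_{π_θ}(T) − G(θ) I(θ)⁻¹ G(θ)ᵀ is positive semidefinite. -/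
open Matrix Filter Topology

/-!
Put `W = diag(P θ₀)`, let `A` have rows `T y - g(θ₀)` and `B` have rows `score y`. Then
`Cov = AᵀWA` and `I = BᵀWB`. Differentiating `∑ y, P θ y = 1` shows that the scores have mean
zero, so the derivative of the mean `g` only sees the centred statistic and `G = AᵀWB`. The claim
is then the Schur-complement inequality `AᵀWA - AᵀWB (BᵀWB)⁻¹ BᵀWA ⪰ 0` for Gram matrices.
-/

namespace Matrix

/-- With `K = (BᴴWB)⁻¹ BᴴWA`, the matrix below equals `(A - BK)ᴴ W (A - BK)`. -/
theorem PosSemidef.gram_schur_complement {Y m n R : Type*} [Fintype Y] [Fintype m] [Fintype n]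
    [DecidableEq n] [CommRing R] [PartialOrder R] [StarRing R] {W : Matrix Y Y R}
    (hW : W.PosSemidef) (A : Matrix Y m R) (B : Matrix Y n R) (hB : IsUnit (Bᴴ * W * B).det) :
    (Aᴴ * W * A - (Aᴴ * W * B) * (Bᴴ * W * B)⁻¹ * (Aᴴ * W * B)ᴴ).PosSemidef := by
  set K := (Bᴴ * W * B)⁻¹ * (Bᴴ * W * A)
  have hK : Bᴴ * W * B * K = Bᴴ * W * A := mul_nonsing_inv_cancel_left _ _ hB
  have hcross : (Aᴴ * W * B)ᴴ = Bᴴ * W * A := by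
    simp only [conjTranspose_mul, conjTranspose_conjTranspose, hW.isHermitian.eq, Matrix.mul_assoc]
  suffices h : (A - B * K)ᴴ * W * (A - B * K) =
      Aᴴ * W * A - (Aᴴ * W * B) * (Bᴴ * W * B)⁻¹ * (Aᴴ * W * B)ᴴ by
    rw [← h]; exact hW.conjTranspose_mul_mul_same _
  rw [hcross]
  calc (A - B * K)ᴴ * W * (A - B * K)
      = Aᴴ * W * A - Aᴴ * W * B * K - Kᴴ * (Bᴴ * W * A - Bᴴ * W * B * K) := by
        simp only [conjTranspose_sub, conjTranspose_mul, Matrix.sub_mul, Matrix.mul_sub,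
          Matrix.mul_assoc]
        abel
    _ = Aᴴ * W * A - Aᴴ * W * B * (Bᴴ * W * B)⁻¹ * (Bᴴ * W * A) := by
        rw [hK, sub_self, Matrix.mul_zero, sub_zero, Matrix.mul_assoc _ _ (Bᴴ * W * A)]

theorem conjTranspose_mul_diagonal_mul_apply {Y m n R : Type*} [Fintype Y] [DecidableEq Y]
    [NonUnitalNonAssocSemiring R] [StarRing R] (A : Matrix Y m R) (d : Y → R) (B : Matrix Y n R)
    (i : m) (j : n) : (Aᴴ * diagonal d * B) i j = ∑ y, star (A y i) * d y * B y j := by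
  rw [mul_apply]
  simp only [mul_diagonal, conjTranspose_apply]

end Matrix

section

variable {E Y : Type*} [NormedAddCommGroup E] [NormedSpace ℝ E] [Fintype Y]
  {P : E → Y → ℝ} {θ₀ : E}

theorem sum_fderiv_eq_zero_of_sum_eq_one (hP : ∀ y, DifferentiableAt ℝ (P · y) θ₀)
    (hsum : ∀ᶠ θ in 𝓝 θ₀, ∑ y, P θ y = 1) : ∑ y, fderiv ℝ (P · y) θ₀ = 0 := by
  have hconst : HasFDerivAt (fun θ => ∑ y, P θ y) (0 : E →L[ℝ] ℝ) θ₀ :=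
    (hasFDerivAt_const 1 θ₀).congr_of_eventuallyEq hsum
  exact (HasFDerivAt.fun_sum fun y _ => (hP y).hasFDerivAt).unique hconst

theorem fderiv_sum_mul_eq_sum_sub_smul (hP : ∀ y, DifferentiableAt ℝ (P · y) θ₀)
    (hsum : ∀ᶠ θ in 𝓝 θ₀, ∑ y, P θ y = 1) (t : Y → ℝ) (c : ℝ) :
    fderiv ℝ (fun θ => ∑ y, P θ y * t y) θ₀ = ∑ y, (t y - c) • fderiv ℝ (P · y) θ₀ := by
  rw [(HasFDerivAt.fun_sum fun y _ => (hP y).hasFDerivAt.mul_const (t y)).fderiv]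
  simp only [sub_smul, Finset.sum_sub_distrib, ← Finset.smul_sum,
    sum_fderiv_eq_zero_of_sum_eq_one hP hsum, smul_zero, sub_zero]

end

theorem stmt_3_general {k s : ℕ} (Y : Type) [Fintype Y]
    (Θ : Set (Fin k → ℝ)) (hΘ : IsOpen Θ) (θ₀ : Fin k → ℝ) (hθ₀ : θ₀ ∈ Θ)
    (P : (Fin k → ℝ) → Y → ℝ)
    (hpos : ∀ θ ∈ Θ, ∀ y : Y, 0 < P θ y)
    (hsum : ∀ θ ∈ Θ, ∑ y : Y, P θ y = 1)
    (hdiff : ∀ y : Y, ContDiffOn ℝ 1 (fun θ => P θ y) Θ)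
    (T : Y → Fin s → ℝ)
    -- score vector of outcome `y` at `θ₀`, `∇_θ log P θ y |_{θ₀}`
    (score : Y → Fin k → ℝ)
    (hscore : ∀ y i, score y i =
      fderiv ℝ (fun θ => P θ y) θ₀ (Pi.single i 1) / P θ₀ y)
    -- Fisher information matrix at `θ₀`
    (I : Matrix (Fin k) (Fin k) ℝ)
    (hI : ∀ a b, I a b = ∑ y : Y, P θ₀ y * (score y a * score y b))
    (hInonsing : IsUnit I.det)
    -- mean of the statistic `T` and its Jacobian at `θ₀`
    (gfun : (Fin k → ℝ) → Fin s → ℝ)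
    (hgfun : ∀ θ j, gfun θ j = ∑ y : Y, P θ y * T y j)
    (G : Matrix (Fin s) (Fin k) ℝ)
    (hG : ∀ j i, G j i = fderiv ℝ (fun θ => gfun θ j) θ₀ (Pi.single i 1))
    -- covariance matrix of `T` under `P θ₀`
    (Cov : Matrix (Fin s) (Fin s) ℝ)
    (hCov : ∀ a b, Cov a b =
      ∑ y : Y, P θ₀ y * ((T y a - gfun θ₀ a) * (T y b - gfun θ₀ b))) :
    (Cov - G * I⁻¹ * Gᵀ).PosSemidef := by
  classical
  set W := diagonal (P θ₀)
  set A : Matrix Y (Fin s) ℝ := of fun y j => T y j - gfun θ₀ j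
  set B : Matrix Y (Fin k) ℝ := of score
  have hnhds : Θ ∈ 𝓝 θ₀ := hΘ.mem_nhds hθ₀
  have hP : ∀ y, DifferentiableAt ℝ (P · y) θ₀ := fun y =>
    ((hdiff y).contDiffAt hnhds).differentiableAt one_ne_zero
  have hfderiv : ∀ y i, fderiv ℝ (P · y) θ₀ (Pi.single i 1) = P θ₀ y * score y i := fun y i => by
    rw [hscore, mul_div_cancel₀ _ (hpos θ₀ hθ₀ y).ne']
  have hW : W.PosSemidef := .diagonal fun y => (hpos θ₀ hθ₀ y).le
  have hCovW : Cov = Aᴴ * W * A := by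
    ext a b
    rw [hCov, conjTranspose_mul_diagonal_mul_apply]
    exact Fintype.sum_congr _ _ fun y => by simp only [A, of_apply, star_trivial]; ring
  have hIW : I = Bᴴ * W * B := by
    ext a b
    rw [hI, conjTranspose_mul_diagonal_mul_apply]
    exact Fintype.sum_congr _ _ fun y => by simp only [B, of_apply, star_trivial]; ring
  have hGW : G = Aᴴ * W * B := by
    ext j i
    have hmean : (fun θ => gfun θ j) = fun θ => ∑ y, P θ y * T y j := funext (hgfun · j)
    rw [hG, hmean, fderiv_sum_mul_eq_sum_sub_smul hP (eventually_of_mem hnhds hsum) _ (gfun θ₀ j)]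
    rw [conjTranspose_mul_diagonal_mul_apply]
    simp only [_root_.sum_apply, _root_.smul_apply, smul_eq_mul, hfderiv]
    exact Fintype.sum_congr _ _ fun y => by simp only [A, B, of_apply, star_trivial]; ring
  rw [hCovW, hIW, hGW, ← conjTranspose_eq_transpose_of_trivial]
  exact hW.gram_schur_complement A B (hIW ▸ hInonsing)

/-- Cramér–Rao inequality over a finite sample space `Y`: for a strictly positive,
continuously differentiable statistical model `P θ : Y → ℝ` on an open set `Θ ∋ θ₀`
with nonsingular Fisher information matrix `I`, and any statistic `T : Y → ℝ^s` with
mean `gfun θ = Σ_y P θ y • T y` and Jacobian `G` at `θ₀`, the matrix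
`Cov(T) − G I⁻¹ Gᵀ` is positive semidefinite. -/
theorem stmt_3 {k s : ℕ} (Y : Type) [Fintype Y] [Nonempty Y]
    (Θ : Set (Fin k → ℝ)) (hΘ : IsOpen Θ) (θ₀ : Fin k → ℝ) (hθ₀ : θ₀ ∈ Θ)
    (P : (Fin k → ℝ) → Y → ℝ)
    (hpos : ∀ θ ∈ Θ, ∀ y : Y, 0 < P θ y)
    (hsum : ∀ θ ∈ Θ, ∑ y : Y, P θ y = 1)
    (hdiff : ∀ y : Y, ContDiffOn ℝ 1 (fun θ => P θ y) Θ)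
    (T : Y → Fin s → ℝ)
    -- score vector of outcome `y` at `θ₀`, `∇_θ log P θ y |_{θ₀}`
    (score : Y → Fin k → ℝ)
    (hscore : ∀ y i, score y i =
      fderiv ℝ (fun θ => P θ y) θ₀ (Pi.single i 1) / P θ₀ y)
    -- Fisher information matrix at `θ₀`
    (I : Matrix (Fin k) (Fin k) ℝ)
    (hI : ∀ a b, I a b = ∑ y : Y, P θ₀ y * (score y a * score y b))
    (hInonsing : IsUnit I.det)
    -- mean of the statistic `T` and its Jacobian at `θ₀`
    (gfun : (Fin k → ℝ) → Fin s → ℝ)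
    (hgfun : ∀ θ j, gfun θ j = ∑ y : Y, P θ y * T y j)
    (G : Matrix (Fin s) (Fin k) ℝ)
    (hG : ∀ j i, G j i = fderiv ℝ (fun θ => gfun θ j) θ₀ (Pi.single i 1))
    -- covariance matrix of `T` under `P θ₀`
    (Cov : Matrix (Fin s) (Fin s) ℝ)
    (hCov : ∀ a b, Cov a b =
      ∑ y : Y, P θ₀ y * ((T y a - gfun θ₀ a) * (T y b - gfun θ₀ b))) :
    (Cov - G * I⁻¹ * Gᵀ).PosSemidef :=
  stmt_3_general Y Θ hΘ θ₀ hθ₀ P hpos hsum hdiff T score hscore I hI hInonsing gfun hgfun G hG Cov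
    hCov
end

section
/- Let Y be a nonempty finite type, μ : Y → ℝ a probability mass function, r : Y → ℝ with r(y) ∈ {0,1} for all y, and u : Y → ℝ^k. Set p = Σ_y μ(y) r(y) and assume 0 < p < 1. Define h(y) = (r(y) − p)·u(y) and the conditional expectations E[f | r=1] = (1/p) Σ_{y : r(y)=1} μ(y) f(y) and E[f | r=0] = (1/(1−p)) Σ_{y : r(y)=0} μ(y) f(y). Then Tr(Cov_μ(h)) = p(1−p)² · E[‖u‖² | r=1] + p²(1−p) · E[‖u‖² | r=0] − p²(1−p)² · ‖E[u | r=1] − E[u | r=0]‖². -/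
/-- Symmetric decomposition of the per-prompt gradient variance: with binary reward
`r`, accuracy `p = Σ_y μ y · r y ∈ (0,1)`, score vectors `u`, and
`h y = (r y − p) · u y`, the total variance satisfies
`Tr(Cov_μ(h)) = p(1−p)²·E[‖u‖² | r=1] + p²(1−p)·E[‖u‖² | r=0]
  − p²(1−p)²·‖E[u | r=1] − E[u | r=0]‖²`. -/
theorem stmt_10 {k : ℕ} (Y : Type) [Fintype Y] [Nonempty Y]
    (μ : Y → ℝ) (hμ0 : ∀ y, 0 ≤ μ y) (hμ1 : ∑ y, μ y = 1)
    (r : Y → ℝ) (hr : ∀ y, r y = 0 ∨ r y = 1)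
    (u : Y → Fin k → ℝ)
    (p : ℝ) (hp : p = ∑ y, μ y * r y) (hp0 : 0 < p) (hp1 : p < 1) :
    let h : Y → Fin k → ℝ := fun y a => (r y - p) * u y a
    let Eh : Fin k → ℝ := fun a => ∑ y, μ y * h y a
    -- total variance `Tr(Cov_μ(h)) = E_μ ‖h − E_μ h‖²`
    let TrCov : ℝ := ∑ y, μ y * ∑ a, (h y a - Eh a) ^ 2
    -- conditional expectations given `r = 1` and `r = 0`
    let E1normsq : ℝ :=
      (1 / p) * ∑ y, if r y = 1 then μ y * ∑ a, u y a ^ 2 else 0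
    let E0normsq : ℝ :=
      (1 / (1 - p)) * ∑ y, if r y = 0 then μ y * ∑ a, u y a ^ 2 else 0
    let E1u : Fin k → ℝ := fun a => (1 / p) * ∑ y, if r y = 1 then μ y * u y a else 0
    let E0u : Fin k → ℝ :=
      fun a => (1 / (1 - p)) * ∑ y, if r y = 0 then μ y * u y a else 0
    TrCov = p * (1 - p) ^ 2 * E1normsq + p ^ 2 * (1 - p) * E0normsq
        - p ^ 2 * (1 - p) ^ 2 * ∑ a, (E1u a - E0u a) ^ 2 := by
  intro h Eh TrCov E1normsq E0normsq E1u E0u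
  have hp0' : p ≠ 0 := ne_of_gt hp0
  have hq0' : (1 - p) ≠ 0 := by linarith
  -- notation for split sums
  -- Eh a = (1-p) * T1 a - p * T0 a
  have hEh : ∀ a, Eh a = (1 - p) * (∑ y, if r y = 1 then μ y * u y a else 0)
      - p * (∑ y, if r y = 0 then μ y * u y a else 0) := by
    intro a
    have step : ∀ y, μ y * h y a
        = (1 - p) * (if r y = 1 then μ y * u y a else 0)
          - p * (if r y = 0 then μ y * u y a else 0) := by
      intro y
      rcases hr y with h1 | h1 <;> simp [h, h1] <;> ring
    calc Eh a = ∑ y, ((1 - p) * (if r y = 1 then μ y * u y a else 0)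
          - p * (if r y = 0 then μ y * u y a else 0)) :=
        Finset.sum_congr rfl (fun y _ => step y)
      _ = _ := by
        rw [Finset.sum_sub_distrib, ← Finset.mul_sum, ← Finset.mul_sum]
  -- scalar variance identity
  have var1 : ∀ (z : Y → ℝ), ∑ y, μ y * (z y - (∑ y, μ y * z y)) ^ 2
      = (∑ y, μ y * z y ^ 2) - (∑ y, μ y * z y) ^ 2 := by
    intro z
    set m : ℝ := ∑ y, μ y * z y with hm
    have e : ∀ y, μ y * (z y - m) ^ 2
        = μ y * z y ^ 2 - 2 * m * (μ y * z y) + m ^ 2 * μ y := by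
      intro y; ring
    calc ∑ y, μ y * (z y - m) ^ 2
        = ∑ y, (μ y * z y ^ 2 - 2 * m * (μ y * z y) + m ^ 2 * μ y) :=
          Finset.sum_congr rfl (fun y _ => e y)
      _ = (∑ y, μ y * z y ^ 2) - 2 * m * (∑ y, μ y * z y) + m ^ 2 * (∑ y, μ y) := by
          rw [Finset.sum_add_distrib, Finset.sum_sub_distrib, ← Finset.mul_sum,
            ← Finset.mul_sum]
      _ = (∑ y, μ y * z y ^ 2) - m ^ 2 := by rw [hμ1, ← hm]; ring
  -- second moment split
  have hM : (∑ y, μ y * ∑ a, h y a ^ 2)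
      = (1 - p) ^ 2 * (∑ y, if r y = 1 then μ y * ∑ a, u y a ^ 2 else 0)
        + p ^ 2 * (∑ y, if r y = 0 then μ y * ∑ a, u y a ^ 2 else 0) := by
    have step : ∀ y, μ y * ∑ a, h y a ^ 2
        = (1 - p) ^ 2 * (if r y = 1 then μ y * ∑ a, u y a ^ 2 else 0)
          + p ^ 2 * (if r y = 0 then μ y * ∑ a, u y a ^ 2 else 0) := by
      intro y
      have hh : ∑ a, h y a ^ 2 = (r y - p) ^ 2 * ∑ a, u y a ^ 2 := by
        rw [Finset.mul_sum]
        exact Finset.sum_congr rfl (fun a _ => by simp [h]; ring)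
      rw [hh]
      rcases hr y with h1 | h1 <;> simp [h1] <;> ring
    calc (∑ y, μ y * ∑ a, h y a ^ 2)
        = ∑ y, ((1 - p) ^ 2 * (if r y = 1 then μ y * ∑ a, u y a ^ 2 else 0)
          + p ^ 2 * (if r y = 0 then μ y * ∑ a, u y a ^ 2 else 0)) :=
          Finset.sum_congr rfl (fun y _ => step y)
      _ = _ := by
        rw [Finset.sum_add_distrib, ← Finset.mul_sum, ← Finset.mul_sum]
  -- TrCov = second moment - ∑ Eh²
  have hTr : TrCov = (∑ y, μ y * ∑ a, h y a ^ 2) - ∑ a, (Eh a) ^ 2 := by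
    have swap : TrCov = ∑ a, ∑ y, μ y * (h y a - Eh a) ^ 2 := by
      show (∑ y, μ y * ∑ a, (h y a - Eh a) ^ 2) = _
      rw [Finset.sum_comm]
      exact Finset.sum_congr rfl (fun y _ => Finset.mul_sum _ _ _)
    have swap2 : (∑ y, μ y * ∑ a, h y a ^ 2) = ∑ a, ∑ y, μ y * h y a ^ 2 := by
      rw [Finset.sum_comm]
      exact Finset.sum_congr rfl (fun y _ => Finset.mul_sum _ _ _)
    rw [swap, swap2, ← Finset.sum_sub_distrib]
    exact Finset.sum_congr rfl (fun a _ => var1 (fun y => h y a))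
  -- Eh² term
  have hEh2 : ∑ a, (Eh a) ^ 2 = p ^ 2 * (1 - p) ^ 2 * ∑ a, (E1u a - E0u a) ^ 2 := by
    rw [Finset.mul_sum]
    refine Finset.sum_congr rfl (fun a _ => ?_)
    rw [hEh a]
    show _ = p ^ 2 * (1 - p) ^ 2 *
      ((1 / p) * (∑ y, if r y = 1 then μ y * u y a else 0)
        - (1 / (1 - p)) * (∑ y, if r y = 0 then μ y * u y a else 0)) ^ 2
    field_simp
  rw [hTr, hM, hEh2]
  show _ = p * (1 - p) ^ 2 *
      ((1 / p) * ∑ y, if r y = 1 then μ y * ∑ a, u y a ^ 2 else 0)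
    + p ^ 2 * (1 - p) *
      ((1 / (1 - p)) * ∑ y, if r y = 0 then μ y * ∑ a, u y a ^ 2 else 0)
    - p ^ 2 * (1 - p) ^ 2 * ∑ a, (E1u a - E0u a) ^ 2
  field_simp
end

section
/- Let Y be a nonempty finite type and for θ in an open neighborhood of θ₀ ∈ ℝ^k let π_θ : Y → ℝ be probability mass functions with π_θ(y) > 0 for all y, continuously differentiable in θ. Let r : Y → ℝ with r(y) ∈ {0,1} for all y, set p(θ) = Σ_y π_θ(y) r(y), g = ∇_θ p(θ)|_{θ₀} ∈ ℝ^k, and assume the Fisher information matrix F = Σ_y π_{θ₀}(y)(∇_θ log π_θ(y)|_{θ₀})(∇_θ log π_θ(y)|_{θ₀})ᵀ is nonsingular. Then gᵀF⁻¹g ≤ p(θ₀)·(1 − p(θ₀)), and hence for every δ > 0, √(2δ·gᵀF⁻¹g) ≤ √(2δ·p(θ₀)(1 − p(θ₀))). -/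
open Matrix

/-! With `v = F⁻¹ g` and score `s`, the quantity `q = gᵀF⁻¹g = vᵀFv` equals `E[(v ⬝ s)²]`.
Since the score has mean zero, `g = E[(r - p) s]`, so also `q = E[(r - p)(v ⬝ s)]`.
Cauchy–Schwarz gives `q² ≤ Var(r) · q`, hence `q ≤ Var(r) = p (1 - p)` for a binary reward. -/

theorem Finset.sq_sum_mul_mul_le {ι : Type*} (s : Finset ι) {w : ι → ℝ} (hw : ∀ i ∈ s, 0 ≤ w i)
    (a b : ι → ℝ) :
    (∑ i ∈ s, w i * a i * b i) ^ 2 ≤ (∑ i ∈ s, w i * a i ^ 2) * ∑ i ∈ s, w i * b i ^ 2 :=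
  Finset.sum_sq_le_sum_mul_sum_of_sq_le_mul s
    (fun i hi => mul_nonneg (hw i hi) (sq_nonneg _)) (fun i hi => mul_nonneg (hw i hi) (sq_nonneg _))
    (fun i _ => le_of_eq (by ring))

theorem Matrix.dotProduct_mulVec_eq_sum_sq {R ι n : Type*} [CommSemiring R] [Fintype ι] [Fintype n]
    (w : ι → R) (s : ι → n → R) {F : Matrix n n R}
    (hF : ∀ a b, F a b = ∑ i, w i * (s i a * s i b)) (v : n → R) :
    v ⬝ᵥ F *ᵥ v = ∑ i, w i * (v ⬝ᵥ s i) ^ 2 := by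
  simp only [dotProduct, mulVec, hF, sq, Finset.mul_sum, Finset.sum_mul]
  rw [Finset.sum_congr rfl fun _ _ => Finset.sum_comm, Finset.sum_comm]
  exact Finset.sum_congr rfl fun _ _ => Finset.sum_congr rfl fun _ _ =>
    Finset.sum_congr rfl fun _ _ => by ring

theorem Matrix.dotProduct_inv_mulVec_le_sum {ι n : Type*} [Fintype ι] [Fintype n] [DecidableEq n]
    {w : ι → ℝ} (hw : ∀ i, 0 ≤ w i) (s : ι → n → ℝ) {F : Matrix n n ℝ}
    (hF : ∀ a b, F a b = ∑ i, w i * (s i a * s i b)) (hFdet : IsUnit F.det)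
    (c : ι → ℝ) {g : n → ℝ} (hg : ∀ j, g j = ∑ i, w i * c i * s i j) :
    g ⬝ᵥ F⁻¹ *ᵥ g ≤ ∑ i, w i * c i ^ 2 := by
  set v := F⁻¹ *ᵥ g
  have hFv : F *ᵥ v = g := by rw [mulVec_mulVec, mul_nonsing_inv F hFdet, one_mulVec]
  have hquad : g ⬝ᵥ v = ∑ i, w i * (v ⬝ᵥ s i) ^ 2 := by
    rw [← dotProduct_mulVec_eq_sum_sq w s hF, hFv, dotProduct_comm]
  have hcov : g ⬝ᵥ v = ∑ i, w i * c i * (v ⬝ᵥ s i) := by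
    simp only [dotProduct, hg, Finset.sum_mul, Finset.mul_sum]
    rw [Finset.sum_comm]
    exact Finset.sum_congr rfl fun _ _ => Finset.sum_congr rfl fun _ _ => by ring
  have hCS : (g ⬝ᵥ v) ^ 2 ≤ (∑ i, w i * c i ^ 2) * (g ⬝ᵥ v) := by
    calc (g ⬝ᵥ v) ^ 2 = (∑ i, w i * c i * (v ⬝ᵥ s i)) ^ 2 := by rw [hcov]
      _ ≤ (∑ i, w i * c i ^ 2) * ∑ i, w i * (v ⬝ᵥ s i) ^ 2 :=
        Finset.sq_sum_mul_mul_le _ (fun i _ => hw i) _ _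
      _ = (∑ i, w i * c i ^ 2) * (g ⬝ᵥ v) := by rw [hquad]
  have hV : 0 ≤ ∑ i, w i * c i ^ 2 := Finset.sum_nonneg fun i _ => mul_nonneg (hw i) (sq_nonneg _)
  nlinarith

theorem Finset.sum_mul_sub_sq_of_sq_eq_self {ι : Type*} (s : Finset ι) {w r : ι → ℝ}
    (hw : ∑ i ∈ s, w i = 1) (hr : ∀ i ∈ s, r i ^ 2 = r i) :
    ∑ i ∈ s, w i * (r i - ∑ j ∈ s, w j * r j) ^ 2
      = (∑ i ∈ s, w i * r i) * (1 - ∑ i ∈ s, w i * r i) := by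
  set p := ∑ j ∈ s, w j * r j
  calc ∑ i ∈ s, w i * (r i - p) ^ 2 = ∑ i ∈ s, (w i * r i ^ 2 - 2 * p * (w i * r i) + p ^ 2 * w i) :=
        Finset.sum_congr rfl fun _ _ => by ring
    _ = p - 2 * p * p + p ^ 2 * 1 := by
        rw [Finset.sum_add_distrib, Finset.sum_sub_distrib, ← Finset.mul_sum, ← Finset.mul_sum, hw,
          Finset.sum_congr rfl fun i hi => by rw [hr i hi]]
    _ = p * (1 - p) := by ring

theorem sum_fderiv_eq_zero_of_eventually_sum_eq {𝕜 E F ι : Type*} [NontriviallyNormedField 𝕜]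
    [NormedAddCommGroup E] [NormedSpace 𝕜 E] [NormedAddCommGroup F] [NormedSpace 𝕜 F]
    (s : Finset ι) {f : ι → E → F} {x : E} {c : F}
    (hf : ∀ i ∈ s, DifferentiableAt 𝕜 (f i) x) (hc : ∀ᶠ z in nhds x, ∑ i ∈ s, f i z = c) :
    ∑ i ∈ s, fderiv 𝕜 (f i) x = 0 := by
  rw [← fderiv_fun_sum hf, Filter.EventuallyEq.fderiv_eq (f := fun _ => c) hc, fderiv_const_apply]

theorem stmt_13_general {k : ℕ} (Y : Type) [Fintype Y]
    (U : Set (Fin k → ℝ)) (hU : IsOpen U) (θ₀ : Fin k → ℝ) (hθ₀ : θ₀ ∈ U)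
    (P : (Fin k → ℝ) → Y → ℝ)
    (hpos : ∀ θ ∈ U, ∀ y : Y, 0 < P θ y)
    (hsum : ∀ θ ∈ U, ∑ y : Y, P θ y = 1)
    (hdiff : ∀ y : Y, ContDiffOn ℝ 1 (fun θ => P θ y) U)
    (r : Y → ℝ) (hr : ∀ y, r y = 0 ∨ r y = 1)
    (p : (Fin k → ℝ) → ℝ) (hp : ∀ θ, p θ = ∑ y : Y, P θ y * r y)
    (g : Fin k → ℝ) (hg : ∀ i, g i = fderiv ℝ p θ₀ (Pi.single i 1))
    -- score vectors and the Fisher information matrix at `θ₀`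
    (score : Y → Fin k → ℝ)
    (hscore : ∀ y i, score y i =
      fderiv ℝ (fun θ => P θ y) θ₀ (Pi.single i 1) / P θ₀ y)
    (F : Matrix (Fin k) (Fin k) ℝ)
    (hF : ∀ a b, F a b = ∑ y : Y, P θ₀ y * (score y a * score y b))
    (hFnonsing : IsUnit F.det) :
    g ⬝ᵥ F⁻¹.mulVec g ≤ p θ₀ * (1 - p θ₀) ∧
    ∀ δ : ℝ, 0 < δ →
      Real.sqrt (2 * δ * (g ⬝ᵥ F⁻¹.mulVec g))
        ≤ Real.sqrt (2 * δ * (p θ₀ * (1 - p θ₀))) := by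
  have hU₀ : U ∈ nhds θ₀ := hU.mem_nhds hθ₀
  have hdiffAt : ∀ y, DifferentiableAt ℝ (fun θ => P θ y) θ₀ := fun y =>
    ((hdiff y).contDiffAt hU₀).differentiableAt one_ne_zero
  have hderiv : ∀ y i, fderiv ℝ (fun θ => P θ y) θ₀ (Pi.single i 1) = P θ₀ y * score y i :=
    fun y i => by rw [hscore, mul_div_cancel₀ _ (hpos θ₀ hθ₀ y).ne']
  have hmean : ∀ i, ∑ y, P θ₀ y * score y i = 0 := fun i => by
    simp_rw [← hderiv, ← _root_.sum_apply,
      sum_fderiv_eq_zero_of_eventually_sum_eq _ (fun y _ => hdiffAt y)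
        (Filter.eventually_of_mem hU₀ hsum), _root_.zero_apply]
  have hfderiv_p : fderiv ℝ p θ₀ = ∑ y, r y • fderiv ℝ (fun θ => P θ y) θ₀ := by
    rw [funext hp, fderiv_fun_sum fun y _ => (hdiffAt y).mul_const (r y)]
    exact Finset.sum_congr rfl fun y _ => fderiv_mul_const (hdiffAt y) (r y)
  -- centring the reward costs nothing because the score has mean zero
  have hgrad : ∀ i, g i = ∑ y, P θ₀ y * (r y - p θ₀) * score y i := fun i => by
    calc g i = ∑ y, P θ₀ y * r y * score y i - p θ₀ * ∑ y, P θ₀ y * score y i := by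
          simp only [hg, hfderiv_p, hmean, _root_.sum_apply,
            _root_.smul_apply, hderiv, smul_eq_mul, mul_zero, sub_zero]
          exact Finset.sum_congr rfl fun y _ => by ring
      _ = ∑ y, P θ₀ y * (r y - p θ₀) * score y i := by
          rw [Finset.mul_sum, ← Finset.sum_sub_distrib]
          exact Finset.sum_congr rfl fun y _ => by ring
  have hvar : ∑ y, P θ₀ y * (r y - p θ₀) ^ 2 = p θ₀ * (1 - p θ₀) := by
    rw [hp θ₀]
    exact Finset.sum_mul_sub_sq_of_sq_eq_self _ (hsum θ₀ hθ₀)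
      fun y _ => by rcases hr y with h | h <;> simp [h]
  have hbound : g ⬝ᵥ F⁻¹ *ᵥ g ≤ p θ₀ * (1 - p θ₀) :=
    hvar ▸ dotProduct_inv_mulVec_le_sum (fun y => (hpos θ₀ hθ₀ y).le) score hF hFnonsing _ hgrad
  exact ⟨hbound, fun δ hδ => Real.sqrt_le_sqrt (mul_le_mul_of_nonneg_left hbound (by positivity))⟩

/-- Prompt difficulty caps the optimization potential: for a strictly positive,
continuously differentiable policy `P θ` on a finite response set `Y` defined on an
open neighborhood `U` of `θ₀`, binary reward `r`, accuracy `p θ = Σ_y P θ y · r y` with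
gradient `g` at `θ₀`, and nonsingular Fisher information matrix `F` at `θ₀`, one has
`gᵀF⁻¹g ≤ p θ₀ · (1 − p θ₀)`, hence for every `δ > 0`,
`√(2δ·gᵀF⁻¹g) ≤ √(2δ·p θ₀·(1 − p θ₀))`. -/
theorem stmt_13 {k : ℕ} (Y : Type) [Fintype Y] [Nonempty Y]
    (U : Set (Fin k → ℝ)) (hU : IsOpen U) (θ₀ : Fin k → ℝ) (hθ₀ : θ₀ ∈ U)
    (P : (Fin k → ℝ) → Y → ℝ)
    (hpos : ∀ θ ∈ U, ∀ y : Y, 0 < P θ y)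
    (hsum : ∀ θ ∈ U, ∑ y : Y, P θ y = 1)
    (hdiff : ∀ y : Y, ContDiffOn ℝ 1 (fun θ => P θ y) U)
    (r : Y → ℝ) (hr : ∀ y, r y = 0 ∨ r y = 1)
    (p : (Fin k → ℝ) → ℝ) (hp : ∀ θ, p θ = ∑ y : Y, P θ y * r y)
    (g : Fin k → ℝ) (hg : ∀ i, g i = fderiv ℝ p θ₀ (Pi.single i 1))
    -- score vectors and the Fisher information matrix at `θ₀`
    (score : Y → Fin k → ℝ)
    (hscore : ∀ y i, score y i =
      fderiv ℝ (fun θ => P θ y) θ₀ (Pi.single i 1) / P θ₀ y)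
    (F : Matrix (Fin k) (Fin k) ℝ)
    (hF : ∀ a b, F a b = ∑ y : Y, P θ₀ y * (score y a * score y b))
    (hFnonsing : IsUnit F.det) :
    g ⬝ᵥ F⁻¹.mulVec g ≤ p θ₀ * (1 - p θ₀) ∧
    ∀ δ : ℝ, 0 < δ →
      Real.sqrt (2 * δ * (g ⬝ᵥ F⁻¹.mulVec g))
        ≤ Real.sqrt (2 * δ * (p θ₀ * (1 - p θ₀))) :=
  stmt_13_general Y U hU θ₀ hθ₀ P hpos hsum hdiff r hr p hp g hg score hscore F hF hFnonsing
end
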